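/- Let ρ be a qubit density matrix (a 2×2 positive semidefinite complex matrix with trace 1), and regard each Pauli matrix σ_x, σ_y, σ_z as a unitary channel with the single Kraus operator σ_x, σ_y, σ_z respectively. Then Q_ρ(σ_x)·Q_ρ(σ_y)·Q_ρ(σ_z) ≥ (τ/8) · |tr(σ_x ρ) · tr(σ_y ρ) · tr(σ_z ρ)| with τ = 64/(3√3). -/

import Mathlib

open Matrix
open scoped ComplexOrder

noncomputable section

/-- Variance of an operator `K` with respect to a state `ρ`:
`V_ρ(K) = ½ tr((K†K + KK†)ρ) − |tr(Kρ)|²`. -/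
def opVar {d : ℕ} (ρ K : Matrix (Fin d) (Fin d) ℂ) : ℝ :=
  (((Kᴴ * K + K * Kᴴ) * ρ).trace).re / 2 - ‖(K * ρ).trace‖ ^ 2

/-- Variance of a channel with Kraus operators `K i`: `V_ρ(Φ) = Σ_i V_ρ(K_i)`. -/
def chanVar {d n : ℕ} (ρ : Matrix (Fin d) (Fin d) ℂ)
    (K : Fin n → Matrix (Fin d) (Fin d) ℂ) : ℝ :=
  ∑ i, opVar ρ (K i)

def psdSqrt {d : ℕ} {ρ : Matrix (Fin d) (Fin d) ℂ} (hρ : ρ.PosSemidef) :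
    Matrix (Fin d) (Fin d) ℂ :=
  (hρ.1.eigenvectorUnitary : Matrix (Fin d) (Fin d) ℂ) *
    diagonal ((↑) ∘ Real.sqrt ∘ hρ.1.eigenvalues) *
    (star hρ.1.eigenvectorUnitary : Matrix (Fin d) (Fin d) ℂ)

/-- Wigner–Yanase skew information of a channel with Kraus operators `K i`:
`I_ρ(Φ) = ½ Σ_i ‖[√ρ, K_i]‖_F²`, where `√ρ` is the PSD square root of `ρ`. -/
def chanSkew {d n : ℕ} (ρ : Matrix (Fin d) (Fin d) ℂ) (hρ : ρ.PosSemidef)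
    (K : Fin n → Matrix (Fin d) (Fin d) ℂ) : ℝ :=
  (1 / 2) * ∑ i,
    (((psdSqrt hρ * K i - K i * psdSqrt hρ)ᴴ * (psdSqrt hρ * K i - K i * psdSqrt hρ)).trace).re

/-- Quantum uncertainty of a channel:
`Q_ρ(Φ) = √(V_ρ(Φ)² − (V_ρ(Φ) − I_ρ(Φ))²)`. -/
def chanQ {d n : ℕ} (ρ : Matrix (Fin d) (Fin d) ℂ) (hρ : ρ.PosSemidef)
    (K : Fin n → Matrix (Fin d) (Fin d) ℂ) : ℝ :=
  Real.sqrt ((chanVar ρ K) ^ 2 - (chanVar ρ K - chanSkew ρ hρ K) ^ 2)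

/-- Pauli matrix σ_x. -/
def pauliX : Matrix (Fin 2) (Fin 2) ℂ := !![0, 1; 1, 0]

/-- Pauli matrix σ_y. -/
def pauliY : Matrix (Fin 2) (Fin 2) ℂ := !![0, -Complex.I; Complex.I, 0]

/-- Pauli matrix σ_z. -/
def pauliZ : Matrix (Fin 2) (Fin 2) ℂ := !![1, 0; 0, -1]

/-!
Write `√ρ = ½ (t + x σx + y σy + z σz)` with `t, x, y, z` real. Then `tr ρ = 1` reads
`t² + x² + y² + z² = 2`, the Bloch vector of `ρ` is `t (x, y, z)`, `V_ρ(σx) = 1 - t²x²` and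
`I_ρ(σx) = y² + z²`, and likewise for `σy`, `σz`. With `u, v, w` the squared Bloch coordinates
this gives `Q_ρ(σx)² ≥ (v + w)(1 - u)`, and the theorem reduces to the inequality
`(v + w)(u + w)(u + v)(1 - u)(1 - v)(1 - w) ≥ (64/27) u v w` for `u, v, w ≥ 0` with
`u + v + w ≤ 1`, which is an equality at `u = v = w = 1/3`.
-/

lemma mul_sum_pow_three_le_sq_prod_add (u v w : ℝ) (hu : 0 ≤ u) (hv : 0 ≤ v) (hw : 0 ≤ w) :
    64 / 27 * (u * v * w) * (u + v + w) ^ 3 ≤ ((v + w) * (u + w) * (u + v)) ^ 2 := by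
  have hmean : 8 / 9 * ((u + v + w) * (u * v + v * w + u * w)) ≤ (v + w) * (u + w) * (u + v) := by
    nlinarith [mul_nonneg hu (sq_nonneg (v - w)), mul_nonneg hv (sq_nonneg (u - w)),
      mul_nonneg hw (sq_nonneg (u - v))]
  have hsym : 3 * (u * v * w) * (u + v + w) ≤ (u * v + v * w + u * w) ^ 2 := by
    nlinarith [sq_nonneg (u * v - v * w), sq_nonneg (v * w - u * w), sq_nonneg (u * v - u * w)]
  calc 64 / 27 * (u * v * w) * (u + v + w) ^ 3
      = 64 / 81 * (u + v + w) ^ 2 * (3 * (u * v * w) * (u + v + w)) := by ring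
    _ ≤ 64 / 81 * (u + v + w) ^ 2 * (u * v + v * w + u * w) ^ 2 := by gcongr
    _ = (8 / 9 * ((u + v + w) * (u * v + v * w + u * w))) ^ 2 := by ring
    _ ≤ ((v + w) * (u + w) * (u + v)) ^ 2 := by gcongr

lemma mul_le_prod_add_mul_prod_one_sub (u v w : ℝ) (hu : 0 ≤ u) (hv : 0 ≤ v) (hw : 0 ≤ w)
    (hs : u + v + w ≤ 1) :
    64 / 27 * (u * v * w) ≤ (v + w) * (u + w) * (u + v) * ((1 - u) * (1 - v) * (1 - w)) := by
  set s := u + v + w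
  set e := u * v + v * w + u * w
  set p := u * v * w
  set F := (v + w) * (u + w) * (u + v)
  -- `(1 - u)(1 - v)(1 - w) - F` and `1 - s³` both carry the factor `1 - s`.
  have hG : (1 - u) * (1 - v) * (1 - w) = F + (1 - s) * (1 + e) := by ring
  have h8 : 8 * p ≤ F := by
    nlinarith [mul_nonneg hu (sq_nonneg (v - w)), mul_nonneg hv (sq_nonneg (u - w)),
      mul_nonneg hw (sq_nonneg (u - v))]
  have hp : 0 ≤ p := by positivity
  have he : 0 ≤ e := by positivity
  have hs1 : s ^ 2 ≤ 1 := by nlinarith [show 0 ≤ s by positivity]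
  have hrest : 64 / 27 * p * (1 + s + s ^ 2) ≤ F * (1 + e) := by
    nlinarith [mul_le_mul_of_nonneg_left h8 (by positivity : (0 : ℝ) ≤ 1 + e), mul_nonneg hp he,
      mul_le_mul_of_nonneg_left hs hp, mul_le_mul_of_nonneg_left hs1 hp]
  calc 64 / 27 * p = 64 / 27 * p * s ^ 3 + (1 - s) * (64 / 27 * p * (1 + s + s ^ 2)) := by ring
    _ ≤ F ^ 2 + (1 - s) * (F * (1 + e)) := by
      gcongr
      exact mul_sum_pow_three_le_sq_prod_add u v w hu hv hw
    _ = F * ((1 - u) * (1 - v) * (1 - w)) := by rw [hG]; ring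

lemma mul_le_uncertainty_sq (t a m : ℝ) (hm : 0 ≤ m) (h : t ^ 2 + a ^ 2 + m = 2) :
    t ^ 2 * m * (1 - (t * a) ^ 2) ≤ (1 - (t * a) ^ 2) ^ 2 - (1 - (t * a) ^ 2 - m) ^ 2 := by
  have key : (1 - (t * a) ^ 2) ^ 2 - (1 - (t * a) ^ 2 - m) ^ 2 - t ^ 2 * m * (1 - (t * a) ^ 2)
      = m * a ^ 2 * (1 - t ^ 2) ^ 2 := by
    linear_combination (-m) * h
  linarith [show 0 ≤ m * a ^ 2 * (1 - t ^ 2) ^ 2 by positivity]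

lemma bloch_uncertainty_product_ge (t x y z : ℝ) (h : t ^ 2 + (x ^ 2 + y ^ 2 + z ^ 2) = 2) :
    64 / (3 * √3) / 8 * |t * x * (t * y) * (t * z)| ≤
      √((1 - (t * x) ^ 2) ^ 2 - (1 - (t * x) ^ 2 - (y ^ 2 + z ^ 2)) ^ 2) *
        √((1 - (t * y) ^ 2) ^ 2 - (1 - (t * y) ^ 2 - (x ^ 2 + z ^ 2)) ^ 2) *
      √((1 - (t * z) ^ 2) ^ 2 - (1 - (t * z) ^ 2 - (x ^ 2 + y ^ 2)) ^ 2) := by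
  set u := (t * x) ^ 2
  set v := (t * y) ^ 2
  set w := (t * z) ^ 2
  have hs : u + v + w ≤ 1 := by
    linarith [show u + v + w = 1 - (1 - t ^ 2) ^ 2 by linear_combination t ^ 2 * h,
      sq_nonneg (1 - t ^ 2)]
  have hx : (v + w) * (1 - u) ≤ (1 - u) ^ 2 - (1 - u - (y ^ 2 + z ^ 2)) ^ 2 := by
    convert mul_le_uncertainty_sq t x (y ^ 2 + z ^ 2) (by positivity) (by linarith) using 1
    ring
  have hy : (u + w) * (1 - v) ≤ (1 - v) ^ 2 - (1 - v - (x ^ 2 + z ^ 2)) ^ 2 := by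
    convert mul_le_uncertainty_sq t y (x ^ 2 + z ^ 2) (by positivity) (by linarith) using 1
    ring
  have hz : (u + v) * (1 - w) ≤ (1 - w) ^ 2 - (1 - w - (x ^ 2 + y ^ 2)) ^ 2 := by
    convert mul_le_uncertainty_sq t z (x ^ 2 + y ^ 2) (by positivity) (by linarith) using 1
    ring
  have hu : 0 ≤ u := by positivity
  have hv : 0 ≤ v := by positivity
  have hw : 0 ≤ w := by positivity
  have hX : 0 ≤ (v + w) * (1 - u) := mul_nonneg (by positivity) (by linarith)
  have hY : 0 ≤ (u + w) * (1 - v) := mul_nonneg (by positivity) (by linarith)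
  have hconst : (64 / (3 * √3) / 8) ^ 2 = 64 / 27 := by
    rw [div_pow, div_pow, mul_pow, Real.sq_sqrt (by norm_num)]; norm_num
  calc 64 / (3 * √3) / 8 * |t * x * (t * y) * (t * z)|
      = √((64 / (3 * √3) / 8 * |t * x * (t * y) * (t * z)|) ^ 2) :=
        (Real.sqrt_sq (by positivity)).symm
    _ = √(64 / 27 * (u * v * w)) := by rw [mul_pow, hconst, sq_abs, mul_pow, mul_pow]
    _ ≤ √((v + w) * (1 - u)) * √((u + w) * (1 - v)) * √((u + v) * (1 - w)) := by
        rw [← Real.sqrt_mul hX, ← Real.sqrt_mul (mul_nonneg hX hY)]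
        apply Real.sqrt_le_sqrt
        linarith [mul_le_prod_add_mul_prod_one_sub u v w hu hv hw hs]
    _ ≤ _ := by gcongr

lemma psdSqrt_mul_self {d : ℕ} {ρ : Matrix (Fin d) (Fin d) ℂ} (hρ : ρ.PosSemidef) :
    psdSqrt hρ * psdSqrt hρ = ρ := by
  have hU : (star hρ.1.eigenvectorUnitary : Matrix (Fin d) (Fin d) ℂ) *
      (hρ.1.eigenvectorUnitary : Matrix (Fin d) (Fin d) ℂ) = 1 :=
    Unitary.coe_star_mul_self _
  conv_rhs => rw [hρ.1.spectral_theorem, Unitary.conjStarAlgAut_apply]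
  unfold psdSqrt
  simp only [mul_assoc]
  rw [← mul_assoc _ (hρ.1.eigenvectorUnitary : Matrix (Fin d) (Fin d) ℂ), hU, one_mul,
    ← mul_assoc (diagonal _), diagonal_mul_diagonal]
  congr 3
  funext i
  simp only [Function.comp_apply, RCLike.ofReal_eq_complex_ofReal, ← Complex.ofReal_mul]
  rw [Real.mul_self_sqrt (hρ.eigenvalues_nonneg i)]

lemma psdSqrt_isHermitian {d : ℕ} {ρ : Matrix (Fin d) (Fin d) ℂ} (hρ : ρ.PosSemidef) :
    (psdSqrt hρ).IsHermitian := by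
  unfold psdSqrt
  rw [star_eq_conjTranspose]
  apply isHermitian_mul_mul_conjTranspose
  apply isHermitian_diagonal_of_self_adjoint
  funext i
  simp [Complex.conj_ofReal]

lemma opVar_of_mem_unitary {d : ℕ} {ρ K : Matrix (Fin d) (Fin d) ℂ}
    (hK : K ∈ unitary (Matrix (Fin d) (Fin d) ℂ)) (htr : ρ.trace = 1) :
    opVar ρ K = 1 - ‖(K * ρ).trace‖ ^ 2 := by
  rw [opVar, ← star_eq_conjTranspose, Unitary.star_mul_self_of_mem hK,
    Unitary.mul_star_self_of_mem hK, add_mul, one_mul, trace_add, htr]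
  norm_num

lemma pauliX_mem_unitary : pauliX ∈ unitary (Matrix (Fin 2) (Fin 2) ℂ) := by
  rw [Unitary.mem_iff, star_eq_conjTranspose]
  constructor <;> ext i j <;> fin_cases i <;> fin_cases j <;> simp [pauliX, mul_apply]

lemma pauliY_mem_unitary : pauliY ∈ unitary (Matrix (Fin 2) (Fin 2) ℂ) := by
  rw [Unitary.mem_iff, star_eq_conjTranspose]
  constructor <;> ext i j <;> fin_cases i <;> fin_cases j <;> simp [pauliY, mul_apply]

lemma pauliZ_mem_unitary : pauliZ ∈ unitary (Matrix (Fin 2) (Fin 2) ℂ) := by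
  rw [Unitary.mem_iff, star_eq_conjTranspose]
  constructor <;> ext i j <;> fin_cases i <;> fin_cases j <;> simp [pauliZ, mul_apply]

def pauliExpansion (t x y z : ℝ) : Matrix (Fin 2) (Fin 2) ℂ :=
  (2 : ℂ)⁻¹ • ((t : ℂ) • 1 + (x : ℂ) • pauliX + (y : ℂ) • pauliY + (z : ℂ) • pauliZ)

lemma Matrix.IsHermitian.exists_eq_pauliExpansion {A : Matrix (Fin 2) (Fin 2) ℂ}
    (hA : A.IsHermitian) : ∃ t x y z : ℝ, A = pauliExpansion t x y z := by
  refine ⟨(A 0 0 + A 1 1).re, 2 * (A 1 0).re, 2 * (A 1 0).im, (A 0 0 - A 1 1).re, ?_⟩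
  have h00 := hA.apply 0 0
  have h11 := hA.apply 1 1
  have h01 := hA.apply 0 1
  simp only [Complex.ext_iff, Complex.star_def, Complex.conj_re, Complex.conj_im] at h00 h11 h01
  ext i j
  fin_cases i <;> fin_cases j <;>
    simp [pauliExpansion, pauliX, pauliY, pauliZ, Complex.ext_iff] <;> (try constructor) <;> linarith

section pauliExpansion

variable (t x y z : ℝ)

lemma pauliExpansion_eq :
    pauliExpansion t x y z = !![(t + z : ℂ) / 2, (x - y * Complex.I) / 2;
      (x + y * Complex.I) / 2, (t - z : ℂ) / 2] := by
  ext i j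
  fin_cases i <;> fin_cases j <;> simp [pauliExpansion, pauliX, pauliY, pauliZ] <;> ring

lemma trace_pauliExpansion_mul_self :
    (pauliExpansion t x y z * pauliExpansion t x y z).trace =
      ((t ^ 2 + (x ^ 2 + y ^ 2 + z ^ 2)) / 2 : ℝ) := by
  apply Complex.ext <;> simp [pauliExpansion_eq, trace_fin_two, pow_two] <;> ring

lemma trace_pauliX_mul_pauliExpansion_sq :
    (pauliX * (pauliExpansion t x y z * pauliExpansion t x y z)).trace = (t * x : ℝ) := by
  apply Complex.ext <;> simp [pauliX, pauliExpansion_eq, trace_fin_two] <;> ring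

lemma trace_pauliY_mul_pauliExpansion_sq :
    (pauliY * (pauliExpansion t x y z * pauliExpansion t x y z)).trace = (t * y : ℝ) := by
  apply Complex.ext <;> simp [pauliY, pauliExpansion_eq, trace_fin_two] <;> ring

lemma trace_pauliZ_mul_pauliExpansion_sq :
    (pauliZ * (pauliExpansion t x y z * pauliExpansion t x y z)).trace = (t * z : ℝ) := by
  apply Complex.ext <;> simp [pauliZ, pauliExpansion_eq, trace_fin_two] <;> ring

lemma trace_commutator_pauliX_sq :
    ((pauliExpansion t x y z * pauliX - pauliX * pauliExpansion t x y z)ᴴ *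
      (pauliExpansion t x y z * pauliX - pauliX * pauliExpansion t x y z)).trace =
      (2 * (y ^ 2 + z ^ 2) : ℝ) := by
  apply Complex.ext <;>
    simp [pauliX, pauliExpansion_eq, trace_fin_two, mul_apply, pow_two, Complex.conj_ofNat]
  ring

lemma trace_commutator_pauliY_sq :
    ((pauliExpansion t x y z * pauliY - pauliY * pauliExpansion t x y z)ᴴ *
      (pauliExpansion t x y z * pauliY - pauliY * pauliExpansion t x y z)).trace =
      (2 * (x ^ 2 + z ^ 2) : ℝ) := by
  apply Complex.ext <;>
    simp [pauliY, pauliExpansion_eq, trace_fin_two, mul_apply, pow_two, Complex.conj_ofNat] <;> ring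

lemma trace_commutator_pauliZ_sq :
    ((pauliExpansion t x y z * pauliZ - pauliZ * pauliExpansion t x y z)ᴴ *
      (pauliExpansion t x y z * pauliZ - pauliZ * pauliExpansion t x y z)).trace =
      (2 * (x ^ 2 + y ^ 2) : ℝ) := by
  apply Complex.ext <;>
    simp [pauliZ, pauliExpansion_eq, trace_fin_two, mul_apply, pow_two, Complex.conj_ofNat] <;> ring

end pauliExpansion

/-- Tight triple-product uncertainty relation for the Pauli unitary channels:
`Q_ρ(σx) Q_ρ(σy) Q_ρ(σz) ≥ (τ/8) |tr(σx ρ) tr(σy ρ) tr(σz ρ)|` with `τ = 64/(3√3)`. -/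
theorem stmt_13
    (ρ : Matrix (Fin 2) (Fin 2) ℂ) (hρ : ρ.PosSemidef) (htr : ρ.trace = 1) :
    chanQ ρ hρ ![pauliX] * chanQ ρ hρ ![pauliY] * chanQ ρ hρ ![pauliZ] ≥
      (64 / (3 * Real.sqrt 3)) / 8 *
        ‖(pauliX * ρ).trace * (pauliY * ρ).trace * (pauliZ * ρ).trace‖ := by
  obtain ⟨t, x, y, z, hA⟩ := (psdSqrt_isHermitian hρ).exists_eq_pauliExpansion
  have hsq := psdSqrt_mul_self hρ
  rw [hA] at hsq
  subst hsq
  have hnorm : t ^ 2 + (x ^ 2 + y ^ 2 + z ^ 2) = 2 := by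
    rw [trace_pauliExpansion_mul_self] at htr
    linarith [Complex.ofReal_eq_one.1 htr]
  simp only [chanQ, chanVar, chanSkew, Fin.sum_univ_one, cons_val_zero, hA,
    opVar_of_mem_unitary pauliX_mem_unitary htr, opVar_of_mem_unitary pauliY_mem_unitary htr,
    opVar_of_mem_unitary pauliZ_mem_unitary htr, trace_pauliX_mul_pauliExpansion_sq,
    trace_pauliY_mul_pauliExpansion_sq, trace_pauliZ_mul_pauliExpansion_sq,
    trace_commutator_pauliX_sq, trace_commutator_pauliY_sq, trace_commutator_pauliZ_sq,
    ← Complex.ofReal_mul, Complex.norm_real, Real.norm_eq_abs, sq_abs, Complex.ofReal_re,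
    one_div, inv_mul_cancel_left₀ (two_ne_zero' ℝ)]
  exact bloch_uncertainty_product_ge t x y z hnorm
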